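/- Let m ≥ 3 be an integer, let n ≥ 10 be a natural number with n ≡ 2 (mod 4), and let l be an integer with 1 ≤ l ≤ m. Then gcd(3·2^m, 3·2^{m−2}·(n−4) + 3·2^{m−1} − 2^l) = 2^l. -/
import Mathlib


/-- For `m ≥ 3`, `n ≥ 10` with `n ≡ 2 (mod 4)`, and `1 ≤ l ≤ m`:
`gcd(3·2^m, 3·2^{m-2}·(n-4) + 3·2^{m-1} - 2^l) = 2^l`. -/
theorem stmt11 (m n l : ℕ) (hm : 3 ≤ m) (hn : 10 ≤ n) (h4 : n % 4 = 2)
    (hl1 : 1 ≤ l) (hlm : l ≤ m) :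
    Nat.gcd (3 * 2 ^ m) (3 * 2 ^ (m - 2) * (n - 4) + 3 * 2 ^ (m - 1) - 2 ^ l) = 2 ^ l := by
  obtain ⟨k, rfl⟩ : ∃ k, m = k + 3 := ⟨m - 3, by omega⟩
  obtain ⟨q, rfl⟩ : ∃ q, n = 4 * q + 10 := ⟨(n - 10) / 4, by omega⟩
  have hE : 3 * 2 ^ (k + 3 - 2) * (4 * q + 10 - 4) + 3 * 2 ^ (k + 3 - 1) - 2 ^ l
      = 3 * 2 ^ (k + 3) * (q + 2) - 2 ^ l := by
    congr 1
    show 3 * 2 ^ (k + 1) * (4 * q + 6) + 3 * 2 ^ (k + 2) = 3 * 2 ^ (k + 3) * (q + 2)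
    ring
  rw [hE]
  have h2l : 2 ^ l ∣ 3 * 2 ^ (k + 3) :=
    Dvd.dvd.mul_left (pow_dvd_pow 2 (by omega)) 3
  have hle : 2 ^ l ≤ 3 * 2 ^ (k + 3) * (q + 2) := by
    have h1 : 2 ^ l ≤ 2 ^ (k + 3) := Nat.pow_le_pow_right (by norm_num) (by omega)
    have h2 : 2 ^ (k + 3) ≤ 3 * 2 ^ (k + 3) * (q + 2) := by nlinarith [Nat.one_le_two_pow (n := k + 3)]
    omega
  apply Nat.dvd_antisymm
  · have h1 : Nat.gcd (3 * 2 ^ (k + 3)) (3 * 2 ^ (k + 3) * (q + 2) - 2 ^ l)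
        ∣ 3 * 2 ^ (k + 3) * (q + 2) :=
      (Nat.gcd_dvd_left _ _).mul_right _
    have h2 := Nat.gcd_dvd_right (3 * 2 ^ (k + 3)) (3 * 2 ^ (k + 3) * (q + 2) - 2 ^ l)
    have h3 : 2 ^ l = 3 * 2 ^ (k + 3) * (q + 2) - (3 * 2 ^ (k + 3) * (q + 2) - 2 ^ l) := by
      omega
    have h4 := Nat.dvd_sub h1 h2
    rwa [← h3] at h4
  · exact Nat.dvd_gcd h2l (Nat.dvd_sub (h2l.mul_right _) dvd_rfl)
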